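/- Let $\mathbb{X}, \mathbb{Y}, \mathbb{Z}$ be Hilbert spaces, $p,q,r > 0$ with $1/p + 1/q = 1/r$. If $A \in S_p(\mathbb{X},\mathbb{Y})$ and $B \in S_q(\mathbb{Y},\mathbb{Z})$, then $BA \in S_r(\mathbb{X},\mathbb{Z})$ and $\|BA\|_{S_r} \leq 2^{1/r}\|A\|_{S_p}\|B\|_{S_q}$. -/

import Mathlib

open MeasureTheory ContinuousLinearMap Complex
open scoped ENNReal Topology

noncomputable def singularValue {𝕜 X Y : Type*} [RCLike 𝕜] [NormedAddCommGroup X]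
    [NormedSpace 𝕜 X] [NormedAddCommGroup Y] [NormedSpace 𝕜 Y]
    (A : X →L[𝕜] Y) (n : ℕ) : ℝ :=
  sInf {c : ℝ | ∃ F : X →L[𝕜] Y, FiniteDimensional 𝕜 (LinearMap.range (F : X →ₗ[𝕜] Y)) ∧
      Module.finrank 𝕜 (LinearMap.range (F : X →ₗ[𝕜] Y)) ≤ n ∧ c = ‖A - F‖}

def MemSchatten {𝕜 X Y : Type*} [RCLike 𝕜] [NormedAddCommGroup X]
    [NormedSpace 𝕜 X] [NormedAddCommGroup Y] [NormedSpace 𝕜 Y]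
    (p : ℝ) (A : X →L[𝕜] Y) : Prop :=
  IsCompactOperator A ∧ Summable fun n => singularValue A n ^ p

noncomputable def schattenNorm {𝕜 X Y : Type*} [RCLike 𝕜] [NormedAddCommGroup X]
    [NormedSpace 𝕜 X] [NormedAddCommGroup Y] [NormedSpace 𝕜 Y]
    (p : ℝ) (A : X →L[𝕜] Y) : ℝ :=
  (∑' n, singularValue A n ^ p) ^ (1 / p)


section Aux

variable {𝕜 X Y Z : Type*} [RCLike 𝕜] [NormedAddCommGroup X] [NormedSpace 𝕜 X]
  [NormedAddCommGroup Y] [NormedSpace 𝕜 Y] [NormedAddCommGroup Z] [NormedSpace 𝕜 Z]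

def svSet (A : X →L[𝕜] Y) (n : ℕ) : Set ℝ :=
  {c : ℝ | ∃ F : X →L[𝕜] Y, FiniteDimensional 𝕜 (LinearMap.range (F : X →ₗ[𝕜] Y)) ∧
      Module.finrank 𝕜 (LinearMap.range (F : X →ₗ[𝕜] Y)) ≤ n ∧ c = ‖A - F‖}

lemma singularValue_eq (A : X →L[𝕜] Y) (n : ℕ) :
    singularValue A n = sInf (svSet A n) := rfl

lemma norm_mem_svSet (A : X →L[𝕜] Y) (n : ℕ) : ‖A‖ ∈ svSet A n := by
  have h : LinearMap.range ((0 : X →L[𝕜] Y) : X →ₗ[𝕜] Y) = ⊥ := by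
    ext x; simp [eq_comm]
  refine ⟨0, ?_, ?_, by simp⟩
  · rw [h]; infer_instance
  · rw [h]; simp

lemma svSet_nonempty (A : X →L[𝕜] Y) (n : ℕ) : (svSet A n).Nonempty :=
  ⟨‖A‖, norm_mem_svSet A n⟩

lemma svSet_nonneg (A : X →L[𝕜] Y) (n : ℕ) : ∀ c ∈ svSet A n, 0 ≤ c := by
  rintro c ⟨F, _, _, rfl⟩; exact norm_nonneg _

lemma svSet_bddBelow (A : X →L[𝕜] Y) (n : ℕ) : BddBelow (svSet A n) :=
  ⟨0, svSet_nonneg A n⟩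

lemma singularValue_nonneg (A : X →L[𝕜] Y) (n : ℕ) : 0 ≤ singularValue A n :=
  Real.sInf_nonneg (svSet_nonneg A n)

lemma singularValue_le (A : X →L[𝕜] Y) (n : ℕ) {c : ℝ} (hc : c ∈ svSet A n) :
    singularValue A n ≤ c :=
  csInf_le (svSet_bddBelow A n) hc

lemma singularValue_antitone (A : X →L[𝕜] Y) : Antitone (singularValue A) := by
  intro m n hmn
  refine csInf_le_csInf (svSet_bddBelow A n) (svSet_nonempty A m) ?_
  rintro c ⟨F, h1, h2, rfl⟩
  exact ⟨F, h1, h2.trans hmn, rfl⟩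

lemma le_mul_csInf {S T : Set ℝ} (hS : S.Nonempty) (hT : T.Nonempty)
    (hS0 : ∀ x ∈ S, 0 ≤ x) (hT0 : ∀ x ∈ T, 0 ≤ x) {t : ℝ}
    (h : ∀ b ∈ S, ∀ a ∈ T, t ≤ b * a) : t ≤ sInf S * sInf T := by
  have hSbd : BddBelow S := ⟨0, hS0⟩
  have hTbd : BddBelow T := ⟨0, hT0⟩
  have hSi : 0 ≤ sInf S := le_csInf hS hS0
  have hTi : 0 ≤ sInf T := le_csInf hT hT0
  rcases le_or_gt t 0 with ht | ht
  · exact ht.trans (mul_nonneg hSi hTi)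
  obtain ⟨a0, ha0⟩ := id hT
  have hbpos : ∀ b ∈ S, 0 < b := by
    intro b hb
    by_contra hb'
    push_neg at hb'
    have := h b hb a0 ha0
    nlinarith [hT0 a0 ha0, hS0 b hb]
  have step1 : ∀ b ∈ S, t ≤ b * sInf T := by
    intro b hb
    have hbp := hbpos b hb
    have : t / b ≤ sInf T := by
      refine le_csInf hT fun a ha => ?_
      rw [div_le_iff₀ hbp]
      calc t ≤ b * a := h b hb a ha
      _ = a * b := mul_comm _ _
    calc t = (t / b) * b := by field_simp
    _ ≤ sInf T * b := by apply mul_le_mul_of_nonneg_right this hbp.le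
    _ = b * sInf T := mul_comm _ _
  have hTpos : 0 < sInf T := by
    obtain ⟨b0, hb0⟩ := hS
    by_contra hT'
    push_neg at hT'
    have := step1 b0 hb0
    nlinarith [hbpos b0 hb0]
  have : t / sInf T ≤ sInf S := by
    refine le_csInf hS fun b hb => ?_
    rw [div_le_iff₀ hTpos]
    exact step1 b hb
  calc t = (t / sInf T) * sInf T := by field_simp
  _ ≤ sInf S * sInf T := mul_le_mul_of_nonneg_right this hTpos.le

lemma singularValue_comp_le (A : X →L[𝕜] Y) (B : Y →L[𝕜] Z) (m n : ℕ) :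
    singularValue (B ∘L A) (m + n) ≤ singularValue B m * singularValue A n := by
  rw [singularValue_eq, singularValue_eq, singularValue_eq]
  refine le_mul_csInf (svSet_nonempty B m) (svSet_nonempty A n)
    (svSet_nonneg B m) (svSet_nonneg A n) ?_
  rintro b ⟨F, hF1, hF2, rfl⟩ a ⟨G, hG1, hG2, rfl⟩
  haveI := hF1
  haveI := hG1
  set H : X →L[𝕜] Z := F ∘L A + (B - F) ∘L G with hH
  set W : Submodule 𝕜 Z :=
    LinearMap.range (F : Y →ₗ[𝕜] Z) ⊔ Submodule.map ((B - F) : Y →ₗ[𝕜] Z) (LinearMap.range (G : X →ₗ[𝕜] Y)) with hW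
  haveI : FiniteDimensional 𝕜
      (Submodule.map ((B - F) : Y →ₗ[𝕜] Z) (LinearMap.range (G : X →ₗ[𝕜] Y))) :=
    Module.Finite.map _ _
  haveI hWfd : FiniteDimensional 𝕜 W := Submodule.finiteDimensional_sup _ _
  have hrange : LinearMap.range (H : X →ₗ[𝕜] Z) ≤ W := by
    rintro z ⟨x, rfl⟩
    have hx : (H : X →ₗ[𝕜] Z) x = F (A x) + ((B - F) : Y →ₗ[𝕜] Z) (G x) := rfl
    rw [hx]
    exact Submodule.add_mem_sup ⟨A x, rfl⟩ ⟨G x, ⟨x, rfl⟩, rfl⟩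
  haveI hfd : FiniteDimensional 𝕜 (LinearMap.range (H : X →ₗ[𝕜] Z)) :=
    Submodule.finiteDimensional_of_le hrange
  have hrank : Module.finrank 𝕜 (LinearMap.range (H : X →ₗ[𝕜] Z)) ≤ m + n := by
    refine (Submodule.finrank_mono hrange).trans ?_
    refine (Submodule.finrank_add_le_finrank_add_finrank _ _).trans ?_
    gcongr
    exact (Submodule.finrank_map_le _ _).trans hG2
  have hdiff : B ∘L A - H = (B - F) ∘L (A - G) := by
    ext x
    simp [hH, ContinuousLinearMap.comp_apply, ContinuousLinearMap.sub_apply,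
      ContinuousLinearMap.add_apply, map_sub]
    abel
  have hmem : ‖B ∘L A - H‖ ∈ svSet (B ∘L A) (m + n) := ⟨H, hfd, hrank, rfl⟩
  calc sInf (svSet (B ∘L A) (m + n)) ≤ ‖B ∘L A - H‖ := csInf_le (svSet_bddBelow _ _) hmem
  _ = ‖(B - F) ∘L (A - G)‖ := by rw [hdiff]
  _ ≤ ‖B - F‖ * ‖A - G‖ := opNorm_comp_le _ _

end Aux

set_option maxHeartbeats 1000000 in
/-- Hölder-type composition rule for Schatten classes:
if `A ∈ S_p(X,Y)`, `B ∈ S_q(Y,Z)` and `1/p + 1/q = 1/r`, then `BA ∈ S_r(X,Z)` with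
`‖BA‖_{S_r} ≤ 2^{1/r} ‖A‖_{S_p} ‖B‖_{S_q}`. -/
theorem memSchatten_comp {X Y Z : Type*}
    [NormedAddCommGroup X] [InnerProductSpace ℂ X] [CompleteSpace X]
    [NormedAddCommGroup Y] [InnerProductSpace ℂ Y] [CompleteSpace Y]
    [NormedAddCommGroup Z] [InnerProductSpace ℂ Z] [CompleteSpace Z]
    (p q r : ℝ) (hp : 0 < p) (hq : 0 < q) (hr : 0 < r)
    (hpqr : 1 / p + 1 / q = 1 / r)
    (A : X →L[ℂ] Y) (B : Y →L[ℂ] Z)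
    (hA : MemSchatten p A) (hB : MemSchatten q B) :
    MemSchatten r (B ∘L A) ∧
      schattenNorm r (B ∘L A) ≤ (2 : ℝ) ^ (1 / r) * schattenNorm p A * schattenNorm q B := by
  obtain ⟨hAc, hAs⟩ := hA
  obtain ⟨hBc, hBs⟩ := hB
  have hcomp : IsCompactOperator (B ∘L A) := by
    have := hBc.comp_clm A
    rwa [ContinuousLinearMap.coe_comp']
  have hsA0 : ∀ n, 0 ≤ singularValue A n := singularValue_nonneg A
  have hsB0 : ∀ n, 0 ≤ singularValue B n := singularValue_nonneg B
  have hsC0 : ∀ n, 0 ≤ singularValue (B ∘L A) n := singularValue_nonneg (B ∘L A)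
  -- conjugate exponents p/r and q/r
  have hrp : r < p := by
    have h1 : 1 / p < 1 / r := by
      rw [← hpqr]; have := one_div_pos.mpr hq; linarith
    have := (div_lt_div_iff₀ hp hr).mp h1
    linarith
  have hconj : (p / r).HolderConjugate (q / r) := by
    constructor
    · have h3 := congrArg (fun x => r * x) hpqr
      simp only [mul_add, mul_one_div] at h3
      rw [div_self hr.ne'] at h3
      rw [inv_div, inv_div, inv_one]
      exact h3
    · exact div_pos hp hr
    · exact div_pos hq hr
  have e1 : ∀ n, (singularValue A n ^ r) ^ (p / r) = singularValue A n ^ p := fun n => by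
    rw [← Real.rpow_mul (hsA0 n)]; congr 1; field_simp
  have e2 : ∀ n, (singularValue B n ^ r) ^ (q / r) = singularValue B n ^ q := fun n => by
    rw [← Real.rpow_mul (hsB0 n)]; congr 1; field_simp
  have hAr : Summable fun n => (singularValue A n ^ r) ^ (p / r) :=
    (summable_congr fun n => e1 n).mpr hAs
  have hBr : Summable fun n => (singularValue B n ^ r) ^ (q / r) :=
    (summable_congr fun n => e2 n).mpr hBs
  obtain ⟨hsum_mul, hle_mul⟩ := Real.summable_and_inner_le_Lp_mul_Lq_tsum_of_nonneg hconj
    (fun n => Real.rpow_nonneg (hsA0 n) r) (fun n => Real.rpow_nonneg (hsB0 n) r) hAr hBr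
  -- even/odd bounds
  have hkey : ∀ n, singularValue (B ∘L A) (2 * n) ≤ singularValue B n * singularValue A n := by
    intro n
    have := singularValue_comp_le A B n n
    rwa [← two_mul] at this
  have heven : ∀ n, singularValue (B ∘L A) (2 * n) ^ r ≤
      singularValue A n ^ r * singularValue B n ^ r := fun n => by
    calc singularValue (B ∘L A) (2 * n) ^ r
        ≤ (singularValue B n * singularValue A n) ^ r :=
          Real.rpow_le_rpow (hsC0 _) (hkey n) hr.le
    _ = singularValue B n ^ r * singularValue A n ^ r := Real.mul_rpow (hsB0 n) (hsA0 n)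
    _ = singularValue A n ^ r * singularValue B n ^ r := mul_comm _ _
  have hodd : ∀ n, singularValue (B ∘L A) (2 * n + 1) ^ r ≤
      singularValue A n ^ r * singularValue B n ^ r := fun n =>
    le_trans (Real.rpow_le_rpow (hsC0 _)
      (singularValue_antitone (B ∘L A) (by omega)) hr.le) (heven n)
  have hsum_even : Summable fun n => singularValue (B ∘L A) (2 * n) ^ r :=
    Summable.of_nonneg_of_le (fun n => Real.rpow_nonneg (hsC0 _) r) heven hsum_mul
  have hsum_odd : Summable fun n => singularValue (B ∘L A) (2 * n + 1) ^ r :=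
    Summable.of_nonneg_of_le (fun n => Real.rpow_nonneg (hsC0 _) r) hodd hsum_mul
  have hsumC : Summable fun k => singularValue (B ∘L A) k ^ r :=
    Summable.even_add_odd (f := fun k => singularValue (B ∘L A) k ^ r) hsum_even hsum_odd
  refine ⟨⟨hcomp, hsumC⟩, ?_⟩
  have htsum : ∑' k, singularValue (B ∘L A) k ^ r ≤
      2 * ∑' n, singularValue A n ^ r * singularValue B n ^ r := by
    rw [← tsum_even_add_odd (f := fun k => singularValue (B ∘L A) k ^ r) hsum_even hsum_odd, two_mul]
    exact add_le_add (Summable.tsum_le_tsum heven hsum_even hsum_mul)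
      (Summable.tsum_le_tsum hodd hsum_odd hsum_mul)
  have hA0sum : 0 ≤ ∑' n, singularValue A n ^ p :=
    tsum_nonneg fun n => Real.rpow_nonneg (hsA0 n) p
  have hB0sum : 0 ≤ ∑' n, singularValue B n ^ q :=
    tsum_nonneg fun n => Real.rpow_nonneg (hsB0 n) q
  have hC0 : 0 ≤ ∑' k, singularValue (B ∘L A) k ^ r :=
    tsum_nonneg fun n => Real.rpow_nonneg (hsC0 n) r
  have key : ∑' k, singularValue (B ∘L A) k ^ r ≤
      2 * ((∑' n, singularValue A n ^ p) ^ (r / p) * (∑' n, singularValue B n ^ q) ^ (r / q)) := by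
    refine htsum.trans ?_
    have : ∑' n, singularValue A n ^ r * singularValue B n ^ r ≤
        (∑' n, singularValue A n ^ p) ^ (r / p) * (∑' n, singularValue B n ^ q) ^ (r / q) := by
      refine hle_mul.trans_eq ?_
      rw [tsum_congr e1, tsum_congr e2, one_div_div, one_div_div]
    linarith
  simp only [schattenNorm]
  calc (∑' k, singularValue (B ∘L A) k ^ r) ^ (1 / r)
      ≤ (2 * ((∑' n, singularValue A n ^ p) ^ (r / p) *
          (∑' n, singularValue B n ^ q) ^ (r / q))) ^ (1 / r) :=
        Real.rpow_le_rpow hC0 key (by positivity)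
  _ = (2 : ℝ) ^ (1 / r) * (((∑' n, singularValue A n ^ p) ^ (r / p)) ^ (1 / r) *
        (((∑' n, singularValue B n ^ q) ^ (r / q)) ^ (1 / r))) := by
      rw [Real.mul_rpow (by norm_num) (by positivity),
        Real.mul_rpow (by positivity) (by positivity)]
  _ = (2 : ℝ) ^ (1 / r) * ((∑' n, singularValue A n ^ p) ^ (1 / p) *
        (∑' n, singularValue B n ^ q) ^ (1 / q)) := by
      have hx1 : r / p * (1 / r) = 1 / p := by
        rw [div_mul_div_comm, mul_one, mul_comm p r, ← div_div, div_self hr.ne']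
      have hx2 : r / q * (1 / r) = 1 / q := by
        rw [div_mul_div_comm, mul_one, mul_comm q r, ← div_div, div_self hr.ne']
      rw [← Real.rpow_mul hA0sum, ← Real.rpow_mul hB0sum, hx1, hx2]
  _ = (2 : ℝ) ^ (1 / r) * (∑' n, singularValue A n ^ p) ^ (1 / p) *
        (∑' n, singularValue B n ^ q) ^ (1 / q) := by ring
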